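/- Let d ≥ 1, let a, b ∈ ℝ^d, λ ∈ ℝ, and let A : ℝ^d → ℝ^d be a linear map that is skew-symmetric (⟨A x, y⟩ = −⟨x, A y⟩ for all x, y). Define φ : ℝ^d → ℝ^d by φ(x) = a + λ x + A x + 2⟨b, x⟩ x − ‖x‖² b. Then for every x ∈ ℝ^d the (Fréchet) derivative J = Dφ(x) has vanishing symmetric trace-free part: (1/2)(J + Jᵀ) − ((tr J)/d)·I = 0, where Jᵀ denotes the adjoint of J with respect to the Euclidean inner product, tr J its trace, and I the identity map. -/

import Mathlib

/-!
At every point `x` the derivative of `φ` is `(λ + 2⟪b, x⟫) • I + K` with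
`K = A + 2 (x ⊗ b - b ⊗ x)` skew-adjoint. Adding its adjoint cancels `K`, and `K` is
trace-free, so both the symmetric part and the trace part of `Dφ(x)` equal `(λ + 2⟪b, x⟫) • I`.
-/

open scoped RealInnerProductSpace
open InnerProductSpace ContinuousLinearMap Module

section

variable {E : Type*} [NormedAddCommGroup E] [InnerProductSpace ℝ E]

noncomputable def stf [FiniteDimensional ℝ E] (J : E →L[ℝ] E) : E →L[ℝ] E :=
  (1 / 2 : ℝ) • (J + adjoint J) - (LinearMap.trace ℝ E J / finrank ℝ E) • ContinuousLinearMap.id ℝ E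

def conformalKillingField (a b : E) (lam : ℝ) (A : E →L[ℝ] E) (y : E) : E :=
  a + lam • y + A y + ((2 * ⟪b, y⟫) • y - ‖y‖ ^ 2 • b)

lemma adjoint_eq_neg_of_inner_map_eq_neg [CompleteSpace E] {A : E →L[ℝ] E}
    (hA : ∀ x y, ⟪A x, y⟫ = -⟪x, A y⟫) : adjoint A = -A :=
  ((eq_adjoint_iff _ _).mpr fun x y => by rw [neg_apply, inner_neg_left, hA, neg_neg]).symm

lemma adjoint_rankOne_sub_rankOne [CompleteSpace E] (x y : E) :
    adjoint (rankOne ℝ x y - rankOne ℝ y x) = -(rankOne ℝ x y - rankOne ℝ y x) := by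
  rw [map_sub, adjoint_rankOne, adjoint_rankOne, neg_sub]

lemma inner_map_self_eq_zero_of_adjoint_eq_neg [CompleteSpace E] {K : E →L[ℝ] E}
    (hK : adjoint K = -K) (v : E) : ⟪v, K v⟫ = 0 := by
  have h : ⟪v, K v⟫ = -⟪v, K v⟫ :=
    calc ⟪v, K v⟫ = ⟪adjoint K v, v⟫ := (adjoint_inner_left K v v).symm
      _ = -⟪v, K v⟫ := by rw [hK, neg_apply, inner_neg_left, real_inner_comm]
  linarith

lemma trace_eq_zero_of_adjoint_eq_neg [FiniteDimensional ℝ E] {K : E →L[ℝ] E}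
    (hK : adjoint K = -K) : LinearMap.trace ℝ E K = 0 := by
  rw [LinearMap.trace_eq_sum_inner _ (stdOrthonormalBasis ℝ E)]
  exact Finset.sum_eq_zero fun i _ => inner_map_self_eq_zero_of_adjoint_eq_neg hK _

lemma stf_smul_id_add_eq_zero [FiniteDimensional ℝ E] (c : ℝ) {K : E →L[ℝ] E}
    (hK : adjoint K = -K) : stf (c • ContinuousLinearMap.id ℝ E + K) = 0 := by
  nontriviality E
  have hsum : c • ContinuousLinearMap.id ℝ E + K + adjoint (c • ContinuousLinearMap.id ℝ E + K)
      = (2 * c) • ContinuousLinearMap.id ℝ E := by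
    rw [map_add, map_smul, adjoint_id, hK]
    module
  have htrace : LinearMap.trace ℝ E ↑(c • ContinuousLinearMap.id ℝ E + K) = c * finrank ℝ E := by
    rw [toLinearMap_add, map_add, trace_eq_zero_of_adjoint_eq_neg hK, toLinearMap_smul, map_smul,
      coe_id, LinearMap.trace_id, smul_eq_mul, add_zero]
  have hn : (finrank ℝ E : ℝ) ≠ 0 := Nat.cast_ne_zero.mpr finrank_pos.ne'
  rw [stf, hsum, htrace, mul_div_cancel_right₀ _ hn, smul_smul, ← sub_smul,
    show 1 / 2 * (2 * c) - c = 0 by ring, zero_smul]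

lemma hasFDerivAt_inner_smul_sub_norm_sq_smul (b x : E) :
    HasFDerivAt (fun y : E => (2 * ⟪b, y⟫) • y - ‖y‖ ^ 2 • b)
      ((2 * ⟪b, x⟫) • ContinuousLinearMap.id ℝ E
        + (2 : ℝ) • (rankOne ℝ x b - rankOne ℝ b x)) x := by
  have h := (((innerSL ℝ b).hasFDerivAt (x := x)).const_mul (2 : ℝ)).smul (hasFDerivAt_id x)
    |>.sub ((hasFDerivAt_id x).norm_sq.smul_const b)
  refine h.congr_fderiv ?_
  ext v
  simp only [add_apply, sub_apply, smul_apply, rankOne_apply, ContinuousLinearMap.id_apply,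
    smulRight_apply, comp_apply, innerSL_apply_apply, id_eq]
  module

lemma hasFDerivAt_conformalKillingField (a b : E) (lam : ℝ) (A : E →L[ℝ] E) (x : E) :
    HasFDerivAt (conformalKillingField a b lam A)
      ((lam + 2 * ⟪b, x⟫) • ContinuousLinearMap.id ℝ E
        + (A + (2 : ℝ) • (rankOne ℝ x b - rankOne ℝ b x))) x := by
  have h := (((hasFDerivAt_const a x).add ((hasFDerivAt_id x).const_smul lam)).add
    A.hasFDerivAt).add (hasFDerivAt_inner_smul_sub_norm_sq_smul b x)
  refine h.congr_fderiv ?_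
  simp only [zero_add, add_smul]
  abel

end

theorem conformal_killing_stf_grad_eq_zero_general
    (d : ℕ)
    (a b : EuclideanSpace ℝ (Fin d)) (lam : ℝ)
    (A : EuclideanSpace ℝ (Fin d) →ₗ[ℝ] EuclideanSpace ℝ (Fin d))
    (hA : ∀ x y : EuclideanSpace ℝ (Fin d), (inner ℝ (A x) y : ℝ) = -(inner ℝ x (A y) : ℝ))
    (φ : EuclideanSpace ℝ (Fin d) → EuclideanSpace ℝ (Fin d))
    (hφ : ∀ x, φ x =
      a + lam • x + A x + ((2 * (inner ℝ b x : ℝ)) • x - (‖x‖ ^ 2) • b)) :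
    ∀ x : EuclideanSpace ℝ (Fin d),
      (1 / 2 : ℝ) • (fderiv ℝ φ x + ContinuousLinearMap.adjoint (fderiv ℝ φ x))
        - ((LinearMap.trace ℝ (EuclideanSpace ℝ (Fin d))
              ((fderiv ℝ φ x : EuclideanSpace ℝ (Fin d) →L[ℝ] EuclideanSpace ℝ (Fin d))
                : EuclideanSpace ℝ (Fin d) →ₗ[ℝ] EuclideanSpace ℝ (Fin d))) / (d : ℝ)) •
            ContinuousLinearMap.id ℝ (EuclideanSpace ℝ (Fin d)) = 0 := by
  intro x
  obtain rfl : φ = conformalKillingField a b lam A.toContinuousLinearMap := funext hφ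
  have hskew : adjoint (A.toContinuousLinearMap + (2 : ℝ) • (rankOne ℝ x b - rankOne ℝ b x))
      = -(A.toContinuousLinearMap + (2 : ℝ) • (rankOne ℝ x b - rankOne ℝ b x)) := by
    rw [map_add, LinearIsometryEquiv.map_smulₛₗ, adjoint_rankOne_sub_rankOne,
      adjoint_eq_neg_of_inner_map_eq_neg hA, RCLike.conj_to_real, smul_neg, neg_add]
  have h := stf_smul_id_add_eq_zero (lam + 2 * ⟪b, x⟫) hskew
  rwa [← (hasFDerivAt_conformalKillingField a b lam A.toContinuousLinearMap x).fderiv, stf,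
    finrank_euclideanSpace_fin] at h

/-- **Conformal Killing fields lie in the kernel of `stf ∇`.**
For `φ x = a + λ • x + A x + (2⟪b, x⟫ • x - ‖x‖² • b)` with `A` skew-symmetric,
the Fréchet derivative `J = Dφ(x)` satisfies
`(1/2)(J + Jᵀ) - ((tr J)/d) • I = 0` at every point. -/
theorem conformal_killing_stf_grad_eq_zero
    (d : ℕ) (hd : 1 ≤ d)
    (a b : EuclideanSpace ℝ (Fin d)) (lam : ℝ)
    (A : EuclideanSpace ℝ (Fin d) →ₗ[ℝ] EuclideanSpace ℝ (Fin d))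
    (hA : ∀ x y : EuclideanSpace ℝ (Fin d), (inner ℝ (A x) y : ℝ) = -(inner ℝ x (A y) : ℝ))
    (φ : EuclideanSpace ℝ (Fin d) → EuclideanSpace ℝ (Fin d))
    (hφ : ∀ x, φ x =
      a + lam • x + A x + ((2 * (inner ℝ b x : ℝ)) • x - (‖x‖ ^ 2) • b)) :
    ∀ x : EuclideanSpace ℝ (Fin d),
      (1 / 2 : ℝ) • (fderiv ℝ φ x + ContinuousLinearMap.adjoint (fderiv ℝ φ x))
        - ((LinearMap.trace ℝ (EuclideanSpace ℝ (Fin d))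
              ((fderiv ℝ φ x : EuclideanSpace ℝ (Fin d) →L[ℝ] EuclideanSpace ℝ (Fin d))
                : EuclideanSpace ℝ (Fin d) →ₗ[ℝ] EuclideanSpace ℝ (Fin d))) / (d : ℝ)) •
            ContinuousLinearMap.id ℝ (EuclideanSpace ℝ (Fin d)) = 0 :=
  conformal_killing_stf_grad_eq_zero_general d a b lam A hA φ hφ
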